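/- For any positive integer m, the map h from O(m,ℝ) × O(m,ℝ) to GL(2m,ℝ) defined by h(k,l) = (1/2) * [[k + JlJ, kJ - Jl],[Jk - lJ, JkJ + l]], where J is the m×m anti-diagonal matrix of 1's, is a group homomorphism. -/

import Mathlib

/-! With `P = [[1, J], [J, -1]]` one has `P * P = 2`, because `J * J = 1`, and a direct block
computation gives `h(k, l) = ½ · P * diag(k, l) * P`. So `h` is the block-diagonal
embedding `(k, l) ↦ diag(k, l)` conjugated by `P` (with `P⁻¹ = ½ · P`), hence multiplicative and
unital. -/

open Matrix

/-- The `m × m` anti-diagonal matrix of `1`'s. -/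
noncomputable def Jmat (m : ℕ) : Matrix (Fin m) (Fin m) ℝ :=
  fun i j => if (i : ℕ) + (j : ℕ) = m - 1 then 1 else 0

/-- The map `h(k,l) = (1/2)[[k + JlJ, kJ - Jl],[Jk - lJ, JkJ + l]]` in block form. -/
noncomputable def hMap (m : ℕ) (k l : Matrix (Fin m) (Fin m) ℝ) :
    Matrix (Fin m ⊕ Fin m) (Fin m ⊕ Fin m) ℝ :=
  (1/2 : ℝ) • Matrix.fromBlocks
    (k + Jmat m * l * Jmat m) (k * Jmat m - Jmat m * l)
    (Jmat m * k - l * Jmat m) (Jmat m * k * Jmat m + l)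

lemma Jmat_eq_permMatrix (m : ℕ) : Jmat m = Fin.revPerm.permMatrix ℝ := by
  ext i j
  simp only [Jmat, PEquiv.toMatrix_apply, Equiv.toPEquiv_apply, Option.mem_def,
    Option.some.injEq, Fin.revPerm_apply, Fin.ext_iff, Fin.val_rev]
  congr 1
  apply propext
  omega

lemma Jmat_mul_self (m : ℕ) : Jmat m * Jmat m = 1 := by
  have hrev : (Fin.revPerm : Equiv.Perm (Fin m)) * Fin.revPerm = 1 := Equiv.ext Fin.rev_rev
  rw [Jmat_eq_permMatrix, ← permMatrix_mul, hrev, permMatrix_one]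

section BlockConjugation

variable {n R : Type*} [Fintype n] [DecidableEq n] [CommRing R]

lemma fromBlocks_one_mul_self_of_mul_self_eq_one {J : Matrix n n R} (hJ : J * J = 1) :
    fromBlocks 1 J J (-1) * fromBlocks 1 J J (-1) = (2 : R) • (1 : Matrix (n ⊕ n) (n ⊕ n) R) := by
  rw [fromBlocks_multiply, ← fromBlocks_one, fromBlocks_smul]
  simp only [hJ, mul_one, one_mul, mul_neg, neg_mul, neg_neg, add_neg_cancel,
    smul_zero, two_smul]

lemma fromBlocks_one_conj_fromBlocks_diagonal (J k l : Matrix n n R) :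
    fromBlocks 1 J J (-1) * fromBlocks k 0 0 l * fromBlocks 1 J J (-1) =
      fromBlocks (k + J * l * J) (k * J - J * l) (J * k - l * J) (J * k * J + l) := by
  simp only [fromBlocks_multiply, mul_one, one_mul, mul_zero, add_zero, zero_add,
    mul_neg, neg_mul, neg_neg, sub_eq_add_neg, mul_assoc]

end BlockConjugation

section HalfConjugation

variable {ι K : Type*} [Fintype ι] [DecidableEq ι] [Field K] [NeZero (2 : K)]
  {P : Matrix ι ι K}

lemma half_smul_conj_mul (hP : P * P = (2 : K) • 1) (A B : Matrix ι ι K) :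
    (1 / 2 : K) • (P * A * P) * ((1 / 2 : K) • (P * B * P)) = (1 / 2 : K) • (P * (A * B) * P) := by
  have hPP : P * A * P * (P * B * P) = (2 : K) • (P * (A * B) * P) := by
    rw [show P * A * P * (P * B * P) = P * A * (P * P) * B * P by simp only [mul_assoc], hP,
      Matrix.mul_smul, mul_one, Matrix.smul_mul, Matrix.smul_mul, mul_assoc P A B]
  rw [smul_mul_smul_comm, hPP, smul_smul]
  congr 1
  field_simp

lemma half_smul_conj_one (hP : P * P = (2 : K) • 1) : (1 / 2 : K) • (P * 1 * P) = 1 := by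
  rw [mul_one, hP, smul_smul, div_mul_cancel₀ 1 two_ne_zero, one_smul]

end HalfConjugation

lemma hMap_eq_half_smul_conj (m : ℕ) (k l : Matrix (Fin m) (Fin m) ℝ) :
    hMap m k l = (1 / 2 : ℝ) • (fromBlocks 1 (Jmat m) (Jmat m) (-1) * fromBlocks k 0 0 l *
      fromBlocks 1 (Jmat m) (Jmat m) (-1)) := by
  rw [hMap, fromBlocks_one_conj_fromBlocks_diagonal]

theorem stmt0 (m : ℕ)
    (k₁ k₂ l₁ l₂ : Matrix (Fin m) (Fin m) ℝ) :
    hMap m (k₁ * k₂) (l₁ * l₂) = hMap m k₁ l₁ * hMap m k₂ l₂ ∧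
    hMap m 1 1 = 1 := by
  have hP := fromBlocks_one_mul_self_of_mul_self_eq_one (Jmat_mul_self m)
  refine ⟨?_, ?_⟩
  · have hdiag :
        fromBlocks k₁ 0 0 l₁ * fromBlocks k₂ 0 0 l₂ = fromBlocks (k₁ * k₂) 0 0 (l₁ * l₂) := by
      simp only [fromBlocks_multiply, mul_zero, zero_mul, add_zero, zero_add]
    rw [hMap_eq_half_smul_conj, hMap_eq_half_smul_conj, hMap_eq_half_smul_conj,
      half_smul_conj_mul hP, hdiag]
  · rw [hMap_eq_half_smul_conj, fromBlocks_one, half_smul_conj_one hP]
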